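/- Suppose A - λE is an n×n regular pencil and C(λE - A)⁻¹B + D = G(λ). If G(λ) = R(λ)·X(λ) with R of full column rank r, then the rank over F(λ) of the block matrix [[A_R - λE_R, B_R, 0, 0], [0, 0, A - λE, B], [C_R, D_R, C, D]] equals n_R + n + r, where (A_R - λE_R, B_R, C_R, D_R) is an n_R-dimensional realization of R(λ) with A_R - λE_R regular. -/

import Mathlib

/-!
Permuting columns turns the compound matrix into the block matrix `[[T, U], [V, W]]` with
`T = diag(A_R - λE_R, A - λE)`, which is invertible by regularity. Its rank is therefore
`n_R + n` plus the rank of the Schur complement `W - V T⁻¹ U`, and since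
`D - C (A - λE)⁻¹ B = C (λE - A)⁻¹ B + D` this Schur complement is the transfer matrix
`[R  G] = R [I  X]` of the two realizations side by side. As `[I  X]` has a right inverse,
`[R  G]` has the same rank `r` as `R`.
-/

set_option synthInstance.maxHeartbeats 1000000
open Matrix

/-- Embed a constant matrix over F into matrices over the rational functions F(λ). -/
noncomputable def constMat {F : Type*} [Field F] {a b : ℕ}
    (M : Matrix (Fin a) (Fin b) F) : Matrix (Fin a) (Fin b) (RatFunc F) :=
  M.map (algebraMap F (RatFunc F))

/-- The matrix pencil A - λE viewed over F(λ). -/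
noncomputable def pencil {F : Type*} [Field F] {a : ℕ}
    (A E : Matrix (Fin a) (Fin a) F) : Matrix (Fin a) (Fin a) (RatFunc F) :=
  constMat A - (RatFunc.X : RatFunc F) • constMat E

namespace LinearMap

variable {K M N M' N' : Type*} [Field K] [AddCommGroup M] [Module K M] [AddCommGroup N]
  [Module K N] [AddCommGroup M'] [Module K M'] [AddCommGroup N'] [Module K N']

theorem finrank_range_prodMap [FiniteDimensional K M'] [FiniteDimensional K N']
    (f : M →ₗ[K] M') (g : N →ₗ[K] N') :
    Module.finrank K (range (f.prodMap g)) =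
      Module.finrank K (range f) + Module.finrank K (range g) := by
  have hrange : range (f.prodMap g) = range ((range f).subtype.prodMap (range g).subtype) := by
    rw [range_prodMap, range_prodMap, Submodule.range_subtype, Submodule.range_subtype]
  rw [hrange, finrank_range_of_inj (Subtype.val_injective.prodMap Subtype.val_injective),
    Module.finrank_prod]

end LinearMap

namespace Matrix

variable {K : Type*} [Field K] {l m n o : Type*}

theorem mulVecLin_fromBlocks_zero_zero [Fintype m] [Fintype n]
    (A : Matrix l m K) (D : Matrix o n K) :
    (fromBlocks A 0 0 D).mulVecLin =
      (LinearEquiv.sumArrowLequivProdArrow l o K K).symm.toLinearMap ∘ₗ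
        A.mulVecLin.prodMap D.mulVecLin ∘ₗ
          (LinearEquiv.sumArrowLequivProdArrow m n K K).toLinearMap := by
  ext v (i | i) <;> simp [fromBlocks_mulVec] <;> rfl

theorem rank_fromBlocks_zero_zero [Fintype l] [Fintype m] [Fintype n] [Fintype o]
    (A : Matrix l m K) (D : Matrix o n K) :
    (fromBlocks A 0 0 D).rank = A.rank + D.rank := by
  rw [rank, mulVecLin_fromBlocks_zero_zero, LinearMap.range_comp, LinearMap.range_comp,
    LinearEquiv.range, Submodule.map_top, LinearEquiv.finrank_map_eq,
    LinearMap.finrank_range_prodMap, rank, rank]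

theorem rank_fromBlocks_of_isUnit_det₁₁ [Fintype l] [Fintype m] [Fintype n] [DecidableEq m]
    [DecidableEq n] (A : Matrix m m K) (B : Matrix m n K) (C : Matrix l m K) (D : Matrix l n K)
    (hA : IsUnit A.det) :
    (fromBlocks A B C D).rank = Fintype.card m + (D - C * A⁻¹ * B).rank := by
  classical
  let := A.invertibleOfIsUnitDet hA
  have hlower : IsUnit (fromBlocks 1 0 (C * ⅟A) (1 : Matrix l l K)).det := by simp
  have hupper : IsUnit (fromBlocks 1 (⅟A * B) 0 (1 : Matrix n n K)).det := by simp
  rw [fromBlocks_eq_of_invertible₁₁, rank_mul_eq_left_of_isUnit_det _ _ hupper,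
    rank_mul_eq_right_of_isUnit_det _ _ hlower, rank_fromBlocks_zero_zero,
    rank_of_isUnit _ (isUnit_of_invertible A), invOf_eq_nonsing_inv]

theorem rank_mul_eq_left_of_mul_eq_one [Fintype m] [Fintype n] [DecidableEq n]
    (A : Matrix l n K) (B : Matrix n m K) (B' : Matrix m n K) (hB : B * B' = 1) :
    (A * B).rank = A.rank := by
  refine le_antisymm (rank_mul_le_left _ _) ?_
  calc A.rank = (A * B * B').rank := by rw [Matrix.mul_assoc, hB, Matrix.mul_one]
    _ ≤ (A * B).rank := rank_mul_le_left _ _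

theorem rank_fromCols_mul_self [Fintype m] [Fintype n] [DecidableEq n]
    (R : Matrix l n K) (X : Matrix n m K) :
    (fromCols R (R * X)).rank = R.rank := by
  have hfactor : fromCols R (R * X) = R * fromCols 1 X := by
    rw [mul_fromCols, Matrix.mul_one]
  rw [hfactor]
  exact rank_mul_eq_left_of_mul_eq_one _ _ (fromRows 1 0)
    (by rw [fromCols_mul_fromRows, Matrix.mul_one, Matrix.mul_zero, add_zero])

theorem fromCols_sub_fromCols {α : Type*} [Sub α] (A₁ : Matrix l m α) (A₂ : Matrix l n α)
    (B₁ : Matrix l m α) (B₂ : Matrix l n α) :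
    fromCols A₁ A₂ - fromCols B₁ B₂ = fromCols (A₁ - B₁) (A₂ - B₂) := by
  ext i (j | j) <;> rfl

theorem inv_neg [Fintype m] [DecidableEq m] (A : Matrix m m K) (hA : IsUnit A.det) :
    (-A)⁻¹ = -A⁻¹ :=
  inv_eq_left_inv (by rw [neg_mul_neg, nonsing_inv_mul _ hA])

theorem submatrix_sumSumSumComm_fromBlocks {α : Type*} [Zero α] {k : Type*}
    (A₁ : Matrix l l α) (A₂ : Matrix m m α) (B₁ : Matrix l n α) (B₂ : Matrix m o α)
    (C₁ : Matrix k l α) (C₂ : Matrix k m α) (D₁ : Matrix k n α) (D₂ : Matrix k o α) :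
    (fromBlocks (fromBlocks A₁ 0 0 A₂) (fromBlocks B₁ 0 0 B₂) (fromCols C₁ C₂)
        (fromCols D₁ D₂)).submatrix (Equiv.refl _) (Equiv.sumSumSumComm l n m o) =
      fromBlocks (fromBlocks A₁ B₁ 0 0) (fromBlocks 0 0 A₂ B₂) (fromCols C₁ D₁)
        (fromCols C₂ D₂) := by
  ext ((i | i) | i) ((j | j) | (j | j)) <;> rfl

end Matrix

theorem constMat_sub_mul_inv_pencil_mul {F : Type*} [Field F] {a p m : ℕ}
    (A E : Matrix (Fin a) (Fin a) F) (B : Matrix (Fin a) (Fin m) F)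
    (C : Matrix (Fin p) (Fin a) F) (D : Matrix (Fin p) (Fin m) F)
    (hreg : (pencil A E).det ≠ 0) :
    constMat D - constMat C * (pencil A E)⁻¹ * constMat B =
      constMat C * ((RatFunc.X : RatFunc F) • constMat E - constMat A)⁻¹ * constMat B
        + constMat D := by
  have hinv : ((RatFunc.X : RatFunc F) • constMat E - constMat A)⁻¹ = -(pencil A E)⁻¹ := by
    rw [← Matrix.inv_neg _ hreg.isUnit, pencil, neg_sub]
  rw [hinv, Matrix.mul_neg, Matrix.neg_mul, sub_eq_neg_add]

/-- If A - λE is a regular pencil realizing G(λ) = C(λE-A)⁻¹B + D and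
G = R·X with R of full column rank r realized by the regular pencil
A_R - λE_R, then the rank over F(λ) of the block matrix
[[A_R-λE_R, B_R, 0, 0],[0, 0, A-λE, B],[C_R, D_R, C, D]] equals n_R + n + r. -/
theorem rank_of_compound_system_pencil (F : Type*) [Field F]
    (n nR p m r : ℕ)
    (A E : Matrix (Fin n) (Fin n) F) (B : Matrix (Fin n) (Fin m) F)
    (C : Matrix (Fin p) (Fin n) F) (D : Matrix (Fin p) (Fin m) F)
    (AR ER : Matrix (Fin nR) (Fin nR) F) (BR : Matrix (Fin nR) (Fin r) F)
    (CR : Matrix (Fin p) (Fin nR) F) (DR : Matrix (Fin p) (Fin r) F)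
    (hreg : (pencil A E).det ≠ 0)
    (hregR : (pencil AR ER).det ≠ 0)
    (G : Matrix (Fin p) (Fin m) (RatFunc F))
    (R : Matrix (Fin p) (Fin r) (RatFunc F))
    (hG : G = constMat C * ((RatFunc.X : RatFunc F) • constMat E - constMat A)⁻¹ * constMat B
            + constMat D)
    (hR : R = constMat CR * ((RatFunc.X : RatFunc F) • constMat ER - constMat AR)⁻¹ * constMat BR
            + constMat DR)
    (Xf : Matrix (Fin r) (Fin m) (RatFunc F))
    (hfac : G = R * Xf) (hRrank : R.rank = r) :
    (Matrix.fromBlocks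
      (Matrix.fromBlocks (pencil AR ER) (constMat BR) 0 0)
      (Matrix.fromBlocks 0 0 (pencil A E) (constMat B))
      (Matrix.fromCols (constMat CR) (constMat DR))
      (Matrix.fromCols (constMat C) (constMat D))).rank = nR + n + r := by
  have hdet : IsUnit (fromBlocks (pencil AR ER) 0 0 (pencil A E)).det := by
    rw [det_fromBlocks_zero₂₁]
    exact (mul_ne_zero hregR hreg).isUnit
  have hschur : fromCols (constMat DR) (constMat D) - fromCols (constMat CR) (constMat C) *
      (fromBlocks (pencil AR ER) 0 0 (pencil A E))⁻¹ *
        fromBlocks (constMat BR) 0 0 (constMat B) = fromCols R G := by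
    rw [inv_fromBlocks_zero₂₁_of_isUnit_iff _ _ _ (iff_of_true
      ((isUnit_iff_isUnit_det _).mpr hregR.isUnit) ((isUnit_iff_isUnit_det _).mpr hreg.isUnit))]
    simp only [fromCols_mul_fromBlocks, Matrix.mul_zero, Matrix.zero_mul, neg_zero,
      add_zero, zero_add, fromCols_sub_fromCols, constMat_sub_mul_inv_pencil_mul _ _ _ _ _ hregR,
      constMat_sub_mul_inv_pencil_mul _ _ _ _ _ hreg, hR, hG]
  rw [← submatrix_sumSumSumComm_fromBlocks, rank_submatrix,
    rank_fromBlocks_of_isUnit_det₁₁ _ _ _ _ hdet, hschur, hfac, rank_fromCols_mul_self, hRrank, Fintype.card_sum, Fintype.card_fin,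
    Fintype.card_fin]
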